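/- Under hypotheses H(A), H(J), H(γ,f) and (H_s), every solution of Problem P_opt solves Problem P_incl: if u ∈ V satisfies 0 ∈ ∂₂ℒ(u,u), then there exists z ∈ ∂₂J(γu, γu) such that ⟨Au, v⟩ + ⟨z, γv⟩ = ⟨f, v⟩ for all v ∈ V. -/

import Mathlib

/-!
Testing `0 ∈ ∂₂ℒ(u, u)` in a direction `v` and splitting the difference quotient of `ℒ(u, ·)`
gives `⟨f - Au, v⟩ ≤ J₂⁰(γu, γu; γv)`: since the Gâteaux derivative `A` is continuous, the
difference quotients of `F_A` converge to `⟨Au, v⟩` jointly in the base point and the step.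
The Clarke derivative `J₂⁰(γu, γu; ·)` is sublinear and bounded by the local Lipschitz constant,
so Hahn–Banach extends `γv ↦ ⟨f - Au, v⟩` from the range of `γ` to a continuous functional `z`
dominated by it, that is, `z ∈ ∂₂J(γu, γu)`.
-/

open Filter Topology

/-- Clarke generalized directional derivative of `j` at `x` in direction `v`. -/
noncomputable def clarkeDeriv {Y : Type*} [NormedAddCommGroup Y] [NormedSpace ℝ Y]
    (j : Y → ℝ) (x v : Y) : ℝ :=
  Filter.limsup (fun p : Y × ℝ => (j (p.1 + p.2 • v) - j p.1) / p.2)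
    ((nhds x) ×ˢ (nhdsWithin (0 : ℝ) (Set.Ioi (0 : ℝ))))

/-- Clarke generalized subdifferential of `j` at `x`. -/
noncomputable def clarkeSubdiff {Y : Type*} [NormedAddCommGroup Y] [NormedSpace ℝ Y]
    (j : Y → ℝ) (x : Y) : Set (Y →L[ℝ] ℝ) :=
  {ξ : Y →L[ℝ] ℝ | ∀ v : Y, ξ v ≤ clarkeDeriv j x v}

open scoped NNReal

lemma isBoundedUnder_le_and_ge_of_abs_le {α : Type*} {l : Filter α} {u : α → ℝ} {C : ℝ}
    (h : ∀ᶠ a in l, |u a| ≤ C) :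
    l.IsBoundedUnder (· ≤ ·) u ∧ l.IsBoundedUnder (· ≥ ·) u :=
  isBoundedUnder_le_abs.1 (isBoundedUnder_of_eventually_le h)

lemma limsup_comp_le_of_tendsto {α β : Type*} {l : Filter α} {l' : Filter β} [l.NeBot]
    {u : β → ℝ} {φ : α → β} {C : ℝ} (hφ : Tendsto φ l l') (hu : ∀ᶠ b in l', |u b| ≤ C) :
    limsup (u ∘ φ) l ≤ limsup u l' := by
  obtain ⟨-, hge⟩ := isBoundedUnder_le_and_ge_of_abs_le (hφ.eventually hu)
  exact limsup_le_limsup_of_le hφ hge.isCoboundedUnder_le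
    (isBoundedUnder_le_and_ge_of_abs_le hu).1

lemma HasLineDerivAt.hasDerivAt_add_smul {E F : Type*} [NormedAddCommGroup E] [NormedSpace ℝ E]
    [NormedAddCommGroup F] [NormedSpace ℝ F] {f : E → F} {f' : F} {x v : E} {t : ℝ}
    (hf : HasLineDerivAt ℝ f f' (x + t • v) v) :
    HasDerivAt (fun s : ℝ => f (x + s • v)) f' t := by
  have h := (show HasDerivAt (fun s : ℝ => f (x + t • v + s • v)) f' (t - t) by
    rw [sub_self]; exact hf).comp_sub_const t t
  convert h using 2 with s
  simp only [add_assoc, ← add_smul, add_sub_cancel]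

section ClarkeFilter

variable {X : Type*} [TopologicalSpace X]

def clarkeFilter (x : X) : Filter (X × ℝ) := 𝓝 x ×ˢ 𝓝[>] 0

instance clarkeFilter_neBot (x : X) : (clarkeFilter x).NeBot := by
  unfold clarkeFilter; infer_instance

lemma map_mul_clarkeFilter (x : X) {c : ℝ} (hc : 0 < c) :
    map (Prod.map id (c * ·)) (clarkeFilter x) = clarkeFilter x := by
  have h : map (c * ·) (𝓝[>] (0 : ℝ)) = 𝓝[>] 0 := by
    nth_rewrite 1 [← comap_mulLeft_nhdsGT_zero hc]
    exact map_comap_of_surjective (fun y => ⟨y / c, mul_div_cancel₀ y hc.ne'⟩) _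
  rw [clarkeFilter, ← Filter.prod_map_map_eq', map_id, h]

end ClarkeFilter

section Clarke

variable {X : Type*} [NormedAddCommGroup X] [NormedSpace ℝ X]

noncomputable def diffQuot (j : X → ℝ) (v : X) (q : X × ℝ) : ℝ :=
  (j (q.1 + q.2 • v) - j q.1) / q.2

lemma clarkeDeriv_eq_limsup (j : X → ℝ) (x v : X) :
    clarkeDeriv j x v = limsup (diffQuot j v) (clarkeFilter x) := rfl

lemma tendsto_add_smul_clarkeFilter (x v : X) :
    Tendsto (fun q : X × ℝ => q.1 + q.2 • v) (clarkeFilter x) (𝓝 x) := by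
  have h : Tendsto (fun q : X × ℝ => q.1 + q.2 • v) (clarkeFilter x) (𝓝 (x + (0 : ℝ) • v)) :=
    tendsto_fst.add ((tendsto_snd.mono_right nhdsWithin_le_nhds).smul_const v)
  rwa [zero_smul, add_zero] at h

lemma eventually_mem_clarkeFilter {x : X} {s : Set X} (hs : s ∈ 𝓝 x) (v : X) :
    ∀ᶠ q in clarkeFilter x, q.1 ∈ s ∧ q.1 + q.2 • v ∈ s ∧ 0 < q.2 :=
  (tendsto_fst.eventually hs).and <| ((tendsto_add_smul_clarkeFilter x v).eventually hs).and <|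
    tendsto_snd.eventually self_mem_nhdsWithin

end Clarke

section Lipschitz

variable {X : Type*} [NormedAddCommGroup X] [NormedSpace ℝ X]
  {j : X → ℝ} {x : X} {K : ℝ≥0} {t : Set X}

lemma eventually_abs_diffQuot_le (hj : LipschitzOnWith K j t) (ht : t ∈ 𝓝 x) (v : X) :
    ∀ᶠ q in clarkeFilter x, |diffQuot j v q| ≤ K * ‖v‖ := by
  filter_upwards [eventually_mem_clarkeFilter ht v] with ⟨y, s⟩ ⟨hy, hys, hs⟩
  have hlip := hj.dist_le_mul _ hys _ hy
  rw [Real.dist_eq, dist_eq_norm, add_sub_cancel_left, norm_smul, Real.norm_of_nonneg hs.le]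
    at hlip
  rw [diffQuot, abs_div, abs_of_pos hs, div_le_iff₀ hs]
  linarith

lemma clarkeDeriv_le (hj : LipschitzOnWith K j t) (ht : t ∈ 𝓝 x) (v : X) :
    clarkeDeriv j x v ≤ K * ‖v‖ := by
  have hb := eventually_abs_diffQuot_le hj ht v
  exact limsup_le_of_le (isBoundedUnder_le_and_ge_of_abs_le hb).2.isCoboundedUnder_le
    (hb.mono fun _ h => (abs_le.1 h).2)

lemma clarkeDeriv_add_le (hj : LipschitzOnWith K j t) (ht : t ∈ 𝓝 x) (v w : X) :
    clarkeDeriv j x (v + w) ≤ clarkeDeriv j x v + clarkeDeriv j x w := by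
  set φ : X × ℝ → X × ℝ := fun q => (q.1 + q.2 • v, q.2)
  have hφ : Tendsto φ (clarkeFilter x) (clarkeFilter x) :=
    (tendsto_add_smul_clarkeFilter x v).prodMk tendsto_snd
  have hsplit : diffQuot j (v + w) = diffQuot j v + diffQuot j w ∘ φ := by
    funext q
    simp only [diffQuot, φ, Pi.add_apply, Function.comp_apply, smul_add, ← add_assoc]
    rw [← add_div, sub_add_sub_cancel']
  have hv := eventually_abs_diffQuot_le hj ht v
  have hw := eventually_abs_diffQuot_le hj ht w
  obtain ⟨hv_le, hv_ge⟩ := isBoundedUnder_le_and_ge_of_abs_le hv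
  obtain ⟨hw_le, hw_ge⟩ := isBoundedUnder_le_and_ge_of_abs_le (hφ.eventually hw)
  calc clarkeDeriv j x (v + w)
      ≤ limsup (diffQuot j v) (clarkeFilter x) + limsup (diffQuot j w ∘ φ) (clarkeFilter x) := by
        rw [clarkeDeriv_eq_limsup, hsplit]
        exact limsup_add_le hv_ge hv_le hw_ge.isCoboundedUnder_le hw_le
    _ ≤ clarkeDeriv j x v + clarkeDeriv j x w := by
        rw [clarkeDeriv_eq_limsup, clarkeDeriv_eq_limsup]
        exact add_le_add le_rfl (limsup_comp_le_of_tendsto hφ hw)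

lemma clarkeDeriv_smul (hj : LipschitzOnWith K j t) (ht : t ∈ 𝓝 x) {c : ℝ} (hc : 0 < c)
    (v : X) : clarkeDeriv j x (c • v) = c * clarkeDeriv j x v := by
  set ψ : X × ℝ → X × ℝ := Prod.map id (c * ·)
  have hscale : diffQuot j (c • v) = fun q => c * diffQuot j v (ψ q) := by
    funext q
    simp only [diffQuot, ψ, Prod.map, id, smul_smul, mul_comm q.2 c]
    rw [mul_div_assoc', mul_div_mul_left _ _ hc.ne']
  have hb : ∀ᶠ q in clarkeFilter x, |diffQuot j v (ψ q)| ≤ K * ‖v‖ := by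
    have hv := eventually_abs_diffQuot_le hj ht v
    rw [← map_mul_clarkeFilter x hc] at hv
    exact eventually_map.1 hv
  obtain ⟨hb_le, hb_ge⟩ := isBoundedUnder_le_and_ge_of_abs_le hb
  have hmul : Monotone (c * ·) := fun _ _ h => mul_le_mul_of_nonneg_left h hc.le
  calc clarkeDeriv j x (c • v) = limsup (fun q => c * diffQuot j v (ψ q)) (clarkeFilter x) := by
        rw [clarkeDeriv_eq_limsup, hscale]
    _ = c * limsup (diffQuot j v ∘ ψ) (clarkeFilter x) :=
        (hmul.map_limsup_of_continuousAt _ (continuous_const_mul c).continuousAt hb_le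
          hb_ge.isCoboundedUnder_le).symm
    _ = c * clarkeDeriv j x v := by
        rw [limsup_comp, map_mul_clarkeFilter x hc, clarkeDeriv_eq_limsup]

end Lipschitz

lemma tendsto_diffQuot_of_hasLineDerivAt {V : Type*} [NormedAddCommGroup V] [NormedSpace ℝ V]
    {F : V → ℝ} {A : V → V →L[ℝ] ℝ} {u : V}
    (hF : ∀ y w, HasLineDerivAt ℝ F (A y w) y w) (hA : ContinuousAt A u) (v : V) :
    Tendsto (diffQuot F v) (clarkeFilter u) (𝓝 (A u v)) := by
  rw [Metric.tendsto_nhds]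
  intro ε hε
  obtain ⟨δ, hδ, hAδ⟩ := Metric.continuousAt_iff.1 hA (ε / (‖v‖ + 1)) (by positivity)
  filter_upwards [eventually_mem_clarkeFilter (Metric.ball_mem_nhds u hδ) v]
    with ⟨y, s⟩ ⟨hy, hys, hs⟩
  dsimp only at hy hys hs
  set g : ℝ → ℝ := fun τ => F (y + τ • (s • v)) - τ * (s * A u v)
  have hg : ∀ τ, HasDerivAt g (s * (A (y + τ • (s • v)) - A u) v) τ := fun τ => by
    have h := ((hF _ (s • v)).hasDerivAt_add_smul (x := y)).sub
      ((hasDerivAt_id τ).mul_const (s * A u v))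
    refine h.congr_deriv ?_
    simp only [sub_apply, map_smul, smul_eq_mul, one_mul, mul_sub]
  -- convexity keeps the segment `[y, y + s • v]` in the ball where `A` is close to `A u`
  have hbound : ∀ τ ∈ Set.Ico (0 : ℝ) 1,
      ‖s * (A (y + τ • (s • v)) - A u) v‖ ≤ s * (ε / (‖v‖ + 1) * ‖v‖) := fun τ hτ => by
    have hmem := (convex_ball u δ).add_smul_mem hy hys (Set.Ico_subset_Icc_self hτ)
    rw [norm_mul, Real.norm_of_nonneg hs.le]
    refine mul_le_mul_of_nonneg_left (((A _ - A u).le_opNorm v).trans ?_) hs.le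
    exact mul_le_mul_of_nonneg_right (by simpa [dist_eq_norm] using (hAδ hmem).le) (norm_nonneg v)
  have hmvt := norm_image_sub_le_of_norm_deriv_le_segment_01'
    (fun τ _ => (hg τ).hasDerivWithinAt) hbound
  have hquot : diffQuot F v (y, s) - A u v = (g 1 - g 0) / s := by
    simp only [diffQuot, g, one_smul, zero_smul, add_zero, one_mul, zero_mul, sub_zero]
    field_simp
    ring
  rw [Real.dist_eq, hquot, abs_div, abs_of_pos hs, div_lt_iff₀ hs]
  calc |g 1 - g 0| ≤ s * (ε / (‖v‖ + 1) * ‖v‖) := hmvt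
    _ < ε * s := by
      rw [mul_comm ε s]
      refine mul_lt_mul_of_pos_left ?_ hs
      rw [div_mul_eq_mul_div, div_lt_iff₀ (by positivity)]
      nlinarith

lemma clarkeDeriv_add_comp_le {V X : Type*} [NormedAddCommGroup V] [NormedSpace ℝ V]
    [NormedAddCommGroup X] [NormedSpace ℝ X] {F : V → ℝ} {j : X → ℝ} {γ : V →L[ℝ] X}
    {K : ℝ≥0} {t : Set X} {u v : V} {a : ℝ}
    (hF : Tendsto (diffQuot F v) (clarkeFilter u) (𝓝 a))
    (hj : LipschitzOnWith K j t) (ht : t ∈ 𝓝 (γ u)) :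
    clarkeDeriv (fun y => F y + j (γ y)) u v ≤ a + clarkeDeriv j (γ u) (γ v) := by
  set φ : V × ℝ → X × ℝ := Prod.map γ id
  have hφ : Tendsto φ (clarkeFilter u) (clarkeFilter (γ u)) :=
    ((γ.continuous.tendsto u).comp tendsto_fst).prodMk tendsto_snd
  have hsplit : diffQuot (fun y => F y + j (γ y)) v = diffQuot F v + diffQuot j (γ v) ∘ φ := by
    funext q
    simp only [diffQuot, φ, Pi.add_apply, Function.comp_apply, Prod.map, id, map_add, map_smul]
    rw [← add_div, add_sub_add_comm]
  have hb := eventually_abs_diffQuot_le hj ht (γ v)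
  obtain ⟨hb_le, hb_ge⟩ := isBoundedUnder_le_and_ge_of_abs_le (hφ.eventually hb)
  calc clarkeDeriv (fun y => F y + j (γ y)) u v
      ≤ limsup (diffQuot F v) (clarkeFilter u)
          + limsup (diffQuot j (γ v) ∘ φ) (clarkeFilter u) := by
        rw [clarkeDeriv_eq_limsup, hsplit]
        exact limsup_add_le hF.isBoundedUnder_ge hF.isBoundedUnder_le hb_ge.isCoboundedUnder_le
          hb_le
    _ ≤ a + clarkeDeriv j (γ u) (γ v) := by
        rw [hF.limsup_eq, clarkeDeriv_eq_limsup]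
        exact add_le_add le_rfl (limsup_comp_le_of_tendsto hφ hb)

lemma exists_le_sublinear_comp_eq {V X : Type*} [AddCommGroup V] [Module ℝ V]
    [AddCommGroup X] [Module ℝ X] {p : X → ℝ}
    (hp_smul : ∀ c : ℝ, 0 < c → ∀ x, p (c • x) = c * p x) (hp_add : ∀ x y, p (x + y) ≤ p x + p y)
    {γ : V →ₗ[ℝ] X} {g : V →ₗ[ℝ] ℝ} (hg : ∀ v, g v ≤ p (γ v)) :
    ∃ z : X →ₗ[ℝ] ℝ, (∀ x, z x ≤ p x) ∧ ∀ v, z (γ v) = g v := by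
  have hp_zero : p 0 = 0 := by
    have h := hp_smul 2 two_pos 0
    rw [smul_zero] at h
    linarith
  have hker : LinearMap.ker γ ≤ LinearMap.ker g := fun v hv => by
    rw [LinearMap.mem_ker] at hv ⊢
    have h₁ := hg v
    have h₂ := hg (-v)
    rw [hv, hp_zero] at h₁
    rw [map_neg, map_neg, hv, neg_zero, hp_zero] at h₂
    linarith
  let ℓ : LinearMap.range γ →ₗ[ℝ] ℝ :=
    (Submodule.liftQ _ g hker).comp γ.quotKerEquivRange.symm.toLinearMap
  have hℓ : ∀ v, ℓ ⟨γ v, LinearMap.mem_range_self γ v⟩ = g v := fun v => by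
    simp only [ℓ, LinearMap.coe_comp, Function.comp_apply, LinearEquiv.coe_coe,
      LinearMap.quotKerEquivRange_symm_apply_image, Submodule.mkQ_apply, Submodule.liftQ_apply]
  obtain ⟨z, hzℓ, hzp⟩ := exists_extension_of_le_sublinear ⟨LinearMap.range γ, ℓ⟩ p hp_smul hp_add
    (by rintro ⟨_, v, rfl⟩; exact (hℓ v).trans_le (hg v))
  exact ⟨z, hzp, fun v => (hzℓ ⟨γ v, LinearMap.mem_range_self γ v⟩).trans (hℓ v)⟩

lemma exists_mem_clarkeSubdiff_comp_eq {V X : Type*} [NormedAddCommGroup V] [NormedSpace ℝ V]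
    [NormedAddCommGroup X] [NormedSpace ℝ X] {j : X → ℝ} {x : X} {K : ℝ≥0} {t : Set X}
    (hj : LipschitzOnWith K j t) (ht : t ∈ 𝓝 x) {γ : V →L[ℝ] X} {g : V →L[ℝ] ℝ}
    (hg : ∀ v, g v ≤ clarkeDeriv j x (γ v)) :
    ∃ z ∈ clarkeSubdiff j x, ∀ v, z (γ v) = g v := by
  obtain ⟨z, hzp, hzγ⟩ := exists_le_sublinear_comp_eq (fun _ hc => clarkeDeriv_smul hj ht hc)
    (clarkeDeriv_add_le hj ht) (γ := γ.toLinearMap) (g := g.toLinearMap) hg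
  have hz_bound : ∀ y, ‖z y‖ ≤ K * ‖y‖ := fun y => by
    have h := (hzp (-y)).trans (clarkeDeriv_le hj ht (-y))
    rw [map_neg, norm_neg] at h
    rw [Real.norm_eq_abs, abs_le]
    exact ⟨by linarith, (hzp y).trans (clarkeDeriv_le hj ht y)⟩
  exact ⟨z.mkContinuous K hz_bound, hzp, hzγ⟩

theorem stmt7_general
    {V : Type*} [NormedAddCommGroup V] [NormedSpace ℝ V]
    {X : Type*} [NormedAddCommGroup X] [NormedSpace ℝ X]
    (A : V → V →L[ℝ] ℝ) (F_A : V → ℝ) (L_A : ℝ)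
    (hA_lip : ∀ u v : V, ‖A u - A v‖ ≤ L_A * ‖u - v‖)
    (hA_pot : ∀ u v : V, HasLineDerivAt ℝ F_A (A u v) u v)
    (J : X → X → ℝ)
    (hJ_lip : ∀ w : X, LocallyLipschitz (J w))
    (γ : V →L[ℝ] X) (f : V →L[ℝ] ℝ)
    (u : V)
    (hu : (0 : V →L[ℝ] ℝ) ∈ clarkeSubdiff (fun v : V => F_A v - f v + J (γ u) (γ v)) u) :
    ∃ z ∈ clarkeSubdiff (J (γ u)) (γ u), ∀ v : V, A u v + z (γ v) = f v := by
  obtain ⟨K, t, ht, hj⟩ := hJ_lip (γ u) (γ u)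
  have hA_cont : ContinuousAt (fun y => A y - f) u :=
    (continuousAt_of_locally_lipschitz one_pos L_A fun y _ => by
      simpa only [dist_eq_norm] using hA_lip y u).sub continuousAt_const
  have hF : ∀ y w, HasLineDerivAt ℝ (fun y => F_A y - f y) ((A y - f) w) y w := fun y w =>
    HasDerivAt.sub (hA_pot y w) (f.hasFDerivAt.hasLineDerivAt w)
  have hkey : ∀ v, (f - A u) v ≤ clarkeDeriv (J (γ u)) (γ u) (γ v) := fun v => by
    have h := (hu v).trans
      (clarkeDeriv_add_comp_le (tendsto_diffQuot_of_hasLineDerivAt hF hA_cont v) hj ht)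
    simp only [zero_apply, sub_apply] at h ⊢
    linarith
  obtain ⟨z, hz, hzγ⟩ := exists_mem_clarkeSubdiff_comp_eq hj ht hkey
  refine ⟨z, hz, fun v => ?_⟩
  rw [hzγ, sub_apply]
  ring

theorem stmt7
    {V : Type*} [NormedAddCommGroup V] [NormedSpace ℝ V] [CompleteSpace V]
    {X : Type*} [NormedAddCommGroup X] [NormedSpace ℝ X] [CompleteSpace X]
    (hV_refl : Function.Surjective (NormedSpace.inclusionInDoubleDual ℝ V))
    (A : V → V →L[ℝ] ℝ) (F_A : V → ℝ) (L_A : ℝ) (hL_A : 0 < L_A)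
    (hA_lip : ∀ u v : V, ‖A u - A v‖ ≤ L_A * ‖u - v‖)
    (hA_pot : ∀ u v : V, HasLineDerivAt ℝ F_A (A u v) u v)
    (m_A : ℝ) (hm_A : 0 < m_A)
    (hA_mono : ∀ u v : V, m_A * ‖u - v‖ ^ 2 ≤ (A u - A v) (u - v))
    (J : X → X → ℝ)
    (hJ_lip : ∀ w : X, LocallyLipschitz (J w))
    (c₀ c₁ c₂ : ℝ) (hc₀ : 0 ≤ c₀) (hc₁ : 0 ≤ c₁) (hc₂ : 0 ≤ c₂)
    (hJ_bdd : ∀ w v : X, ∀ ξ ∈ clarkeSubdiff (J w) v, ‖ξ‖ ≤ c₀ + c₁ * ‖v‖ + c₂ * ‖w‖)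
    (m_α m_L : ℝ) (hm_α : 0 ≤ m_α) (hm_L : 0 ≤ m_L)
    (hJ_mono : ∀ w₁ w₂ v₁ v₂ : X,
      clarkeDeriv (J w₁) v₁ (v₂ - v₁) + clarkeDeriv (J w₂) v₂ (v₁ - v₂)
        ≤ m_α * ‖v₁ - v₂‖ ^ 2 + m_L * ‖w₁ - w₂‖ * ‖v₁ - v₂‖)
    (γ : V →L[ℝ] X) (f : V →L[ℝ] ℝ)
    (hs : (m_α + m_L) * ‖γ‖ ^ 2 < m_A)
    (u : V)
    (hu : (0 : V →L[ℝ] ℝ) ∈ clarkeSubdiff (fun v : V => F_A v - f v + J (γ u) (γ v)) u) :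
    ∃ z ∈ clarkeSubdiff (J (γ u)) (γ u), ∀ v : V, A u v + z (γ v) = f v :=
  stmt7_general A F_A L_A hA_lip hA_pot J hJ_lip γ f u hu
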